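/- Let n ≥ 2 and let 0 = α_1 ≤ α_2 ≤ … ≤ α_{n+1} be the eigenvalues (with multiplicity) of M. Then α_1 = 0 is a simple eigenvalue, α_i > 0 for 2 ≤ i ≤ n+1, and ∑_{i=2}^{n+1} 1/α_i = (49n³ + 63n² + 38n)/(6(7n+3)). -/

import Mathlib

open Polynomial

/-- The tridiagonal matrix `M` (of size `(n+1) × (n+1)`). -/
noncomputable def Mmat (n : ℕ) : Matrix (Fin (n+1)) (Fin (n+1)) ℝ :=
  Matrix.of fun i j =>
    if i = j then (if i.val = 0 ∨ i.val = n then 1/5 else 2/7)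
    else if i.val + 1 = j.val ∨ j.val + 1 = i.val then
      (if min i.val j.val = 0 ∨ max i.val j.val = n then -(1/Real.sqrt 35) else -(1/7))
    else 0

/-!
`M = Cᵀ C`, where `C` is the signed incidence matrix of the path `0 — 1 — ⋯ — n` with the
column of vertex `l` scaled by `r l ^ (-1/2)`, for the resistances `r = (5, 7, …, 7, 5)`.
Hence `χ_M = X · χ_K` with `K = C Cᵀ`, which is positive definite: its inverse is the Green
function of the path, `K⁻¹ i k = P (min i k) * (T - P (max i k)) / T` with the partial sums
`P a = r 0 + ⋯ + r a` and `T = P n`. So `0` is a simple eigenvalue of `M`, the others are the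
(positive) eigenvalues of `K`, and `∑ 1 / αᵢ = tr K⁻¹ = ∑_{i<n} (7i+5)(7n-2-7i) / (7n+3)`.
-/

open Matrix Finset

theorem Polynomial.eval_zero_derivative_prod_X_sub_C {ι K : Type*} [Field K] [DecidableEq ι]
    (s : Finset ι) (μ : ι → K) (hμ : ∀ i ∈ s, μ i ≠ 0) :
    (derivative (∏ i ∈ s, (X - C (μ i)))).eval 0 =
      -(∏ i ∈ s, (X - C (μ i))).eval 0 * ∑ i ∈ s, (μ i)⁻¹ := by
  simp only [derivative_prod_finset, derivative_X_sub_C, mul_one, eval_finsetSum, eval_prod,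
    eval_sub, eval_X, eval_C, zero_sub, Finset.mul_sum]
  refine Finset.sum_congr rfl fun i hi => ?_
  rw [← Finset.mul_prod_erase s _ hi]
  field_simp [hμ i hi]

section Charpoly

variable {n K : Type*} [Fintype n] [DecidableEq n] [Field K]

theorem Matrix.charpoly_eq_C_det_mul_det_one_add_X_smul (A : Matrix n n K) (hA : A.det ≠ 0) :
    A.charpoly = C (-A).det * (1 + (X : K[X]) • (-A⁻¹).map C).det := by
  have hAA : A * A⁻¹ = 1 := A.mul_nonsing_inv (isUnit_iff_ne_zero.mpr hA)
  have : charmatrix A = (-A).map C * (1 + (X : K[X]) • (-A⁻¹).map C) := by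
    rw [mul_add, mul_one, Matrix.mul_smul, ← Matrix.map_mul, neg_mul_neg, hAA, charmatrix,
      scalar_apply, smul_eq_diagonal_mul]
    simp [sub_eq_neg_add, Matrix.map_neg]
  rw [charpoly, this, det_mul, ← RingHom.mapMatrix_apply, ← RingHom.map_det]

/-- Comparing the logarithmic derivatives at `0` of both factorisations of `χ_A`. -/
theorem Matrix.trace_inv_eq_sum_inv {ι : Type*} [DecidableEq ι] (A : Matrix n n K)
    (hA : A.det ≠ 0) (s : Finset ι) (μ : ι → K)
    (hchar : A.charpoly = ∏ i ∈ s, (X - C (μ i))) :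
    A⁻¹.trace = ∑ i ∈ s, (μ i)⁻¹ := by
  have hμ : ∀ i ∈ s, μ i ≠ 0 := by
    intro i hi h0
    have h := congrArg (eval 0) hchar
    rw [← coeff_zero_eq_eval_zero, eval_prod, Finset.prod_eq_zero hi (by simp [h0])] at h
    exact hA (by rw [det_eq_sign_charpoly_coeff, h, mul_zero])
  have h := eval_zero_derivative_prod_X_sub_C s μ hμ
  rw [← hchar, A.charpoly_eq_C_det_mul_det_one_add_X_smul hA, derivative_mul, derivative_C,
    zero_mul, zero_add, eval_mul, eval_mul, eval_C, derivative_det_one_add_X_smul,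
    eval_det_add_X_smul, det_one, eval_one, trace_neg] at h
  have hA' : (-A).det ≠ 0 := by simpa [det_neg] using hA
  exact (mul_left_cancel₀ hA' (by linear_combination h)).symm

end Charpoly

theorem Matrix.PosDef.pos_of_isRoot_charpoly {n : Type*} [Fintype n] [DecidableEq n]
    {A : Matrix n n ℝ} (hA : A.PosDef) {t : ℝ} (ht : A.charpoly.IsRoot t) : 0 < t := by
  have ht' : t ∈ A.charpoly.roots := (mem_roots A.charpoly_monic.ne_zero).mpr ht
  rw [hA.isHermitian.roots_charpoly_eq_eigenvalues] at ht'
  obtain ⟨i, -, rfl⟩ := Multiset.mem_map.mp ht'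
  exact hA.eigenvalues_pos i

theorem Matrix.posDef_self_mul_transpose_of_det_ne_zero {m n : Type*} [Fintype m] [Fintype n]
    [DecidableEq m] (A : Matrix m n ℝ) (hA : (A * Aᵀ).det ≠ 0) : (A * Aᵀ).PosDef := by
  have h := posSemidef_self_mul_conjTranspose A
  rw [conjTranspose_eq_transpose_of_trivial] at h
  exact h.posDef_iff_det_ne_zero.mpr hA

theorem eq_zero_and_prod_succ_eq_of_prod_eq_X_mul {n : ℕ} {α : Fin (n + 1) → ℝ}
    (hα : Monotone α) {q : ℝ[X]} (hq : ∀ t, q.IsRoot t → 0 < t)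
    (h : ∏ i, (X - C (α i)) = X * q) : α 0 = 0 ∧ ∏ i : Fin n, (X - C (α i.succ)) = q := by
  have hnonneg : ∀ i, 0 ≤ α i := by
    intro i
    have hi := congrArg (eval (α i)) h
    rw [eval_prod, Finset.prod_eq_zero (mem_univ i) (by simp), eval_mul, eval_X] at hi
    rcases mul_eq_zero.mp hi.symm with h0 | hroot
    · exact h0.ge
    · exact (hq _ hroot).le
  obtain ⟨i₀, -, hi₀⟩ := Finset.prod_eq_zero_iff.mp
    (by simpa [eval_prod] using congrArg (eval 0) h : ∏ i, -α i = 0)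
  have h0 : α 0 = 0 := le_antisymm ((hα (Fin.zero_le i₀)).trans (by linarith)) (hnonneg 0)
  refine ⟨h0, mul_left_cancel₀ X_ne_zero ?_⟩
  rwa [Fin.prod_univ_succ, h0, C_0, sub_zero] at h

section Path

variable {R : Type*} [CommRing R]

def pathIncidence (n : ℕ) (d : ℕ → R) : Matrix (Fin n) (Fin (n + 1)) R :=
  of fun i l => ((if (l : ℕ) = i then 1 else 0) - (if (l : ℕ) = i + 1 then 1 else 0)) * d l

theorem pathIncidence_transpose_mul_self_apply (n : ℕ) (d : ℕ → R) (j k : Fin (n + 1)) :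
    ((pathIncidence n d)ᵀ * pathIncidence n d) j k = d j * d k *
      ((if (j : ℕ) = k then (if (j : ℕ) < n then 1 else 0) + (if 0 < (j : ℕ) then 1 else 0)
          else 0) - (if (j : ℕ) + 1 = k ∨ (k : ℕ) + 1 = j then 1 else 0)) := by
  obtain ⟨j, hj⟩ := j
  obtain ⟨k, hk⟩ := k
  simp only [mul_apply, transpose_apply, pathIncidence, of_apply]
  rw [Fin.sum_univ_eq_sum_range (fun i => ((if j = i then 1 else 0) - (if j = i + 1 then 1 else 0))
    * d j * (((if k = i then 1 else 0) - (if k = i + 1 then 1 else 0)) * d k))]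
  rcases j with _ | j <;> rcases k with _ | k <;>
  simp [sub_mul, mul_sub, ite_mul, mul_ite, Finset.sum_sub_distrib, Finset.sum_ite_eq] <;>
  (try split_ifs) <;> first | omega | (subst_vars; ring)

theorem pathIncidence_mul_transpose_apply (n : ℕ) (d : ℕ → R) (i k : Fin n) :
    (pathIncidence n d * (pathIncidence n d)ᵀ) i k =
      (if (i : ℕ) = k then d i ^ 2 + d (i + 1) ^ 2 else 0)
        - (if (i : ℕ) + 1 = k then d k ^ 2 else 0)
        - (if (k : ℕ) + 1 = i then d i ^ 2 else 0) := by
  obtain ⟨i, hi⟩ := i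
  obtain ⟨k, hk⟩ := k
  simp only [mul_apply, transpose_apply, pathIncidence, of_apply]
  rw [Fin.sum_univ_eq_sum_range (fun l => ((if l = i then 1 else 0) - (if l = i + 1 then 1 else 0))
    * d l * (((if l = k then 1 else 0) - (if l = k + 1 then 1 else 0)) * d l))]
  simp [sub_mul, mul_sub, ite_mul, mul_ite, Finset.sum_sub_distrib, Finset.sum_ite_eq', hk]
  split_ifs <;> first | omega | (subst_vars; ring)

variable {𝕜 : Type*} [Field 𝕜]

/-- The Green function of the path with resistances `r`, times the total resistance, in vertex
indices shifted by one so that it vanishes at the boundary vertices `0` and `n + 1`. -/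
def pathGreenFun (n : ℕ) (r : ℕ → 𝕜) (a b : ℕ) : 𝕜 :=
  (∑ l ∈ range (min a b), r l) * (∑ l ∈ range (n + 1), r l - ∑ l ∈ range (max a b), r l)

noncomputable def pathGreen (n : ℕ) (r : ℕ → 𝕜) : Matrix (Fin n) (Fin n) 𝕜 :=
  of fun i k => pathGreenFun n r (i + 1) (k + 1) / ∑ l ∈ range (n + 1), r l

theorem pathGreenFun_zero_left (n : ℕ) (r : ℕ → 𝕜) (b : ℕ) :
    pathGreenFun n r 0 b = 0 := by
  simp [pathGreenFun]

theorem pathGreenFun_add_one_left {n b : ℕ} (r : ℕ → 𝕜) (hb : b ≤ n + 1) :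
    pathGreenFun n r (n + 1) b = 0 := by
  simp [pathGreenFun, max_eq_left hb]

theorem pathGreenFun_recurrence {n i k : ℕ} (hi : i < n) (d r : ℕ → 𝕜)
    (hdr : ∀ l ≤ n, d l ^ 2 * r l = 1) :
    (d i ^ 2 + d (i + 1) ^ 2) * pathGreenFun n r (i + 1) k
      - d (i + 1) ^ 2 * pathGreenFun n r (i + 2) k - d i ^ 2 * pathGreenFun n r i k =
      if i + 1 = k then ∑ l ∈ range (n + 1), r l else 0 := by
  set Q : ℕ → 𝕜 := fun a => ∑ l ∈ range a, r l
  have hw : ∀ a ≤ n, d a ^ 2 * (Q (a + 1) - Q a) = 1 := fun a ha => by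
    simp only [Q, sum_range_succ, add_sub_cancel_left, hdr a ha]
  have h₀ := hw i (by omega)
  have h₁ := hw (i + 1) (by omega)
  rcases lt_trichotomy (i + 1) k with h | rfl | h
  · simp only [pathGreenFun, if_neg h.ne, min_eq_left (by omega : i + 1 ≤ k),
      min_eq_left (by omega : i + 2 ≤ k), min_eq_left (by omega : i ≤ k),
      max_eq_right (by omega : i + 1 ≤ k), max_eq_right (by omega : i + 2 ≤ k),
      max_eq_right (by omega : i ≤ k)]
    linear_combination (Q (n + 1) - Q k) * (h₀ - h₁)
  · simp only [pathGreenFun, ↓reduceIte, min_self, max_self,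
      min_eq_right (by omega : i + 1 ≤ i + 2), max_eq_left (by omega : i + 1 ≤ i + 2),
      min_eq_left (by omega : i ≤ i + 1), max_eq_right (by omega : i ≤ i + 1)]
    linear_combination (Q (n + 1) - Q (i + 1)) * h₀ + Q (i + 1) * h₁
  · simp only [pathGreenFun, if_neg h.ne', min_eq_right (by omega : k ≤ i + 1),
      min_eq_right (by omega : k ≤ i + 2), min_eq_right (by omega : k ≤ i),
      max_eq_left (by omega : k ≤ i + 1), max_eq_left (by omega : k ≤ i + 2),
      max_eq_left (by omega : k ≤ i)]
    linear_combination Q k * (h₁ - h₀)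

theorem pathIncidence_mul_transpose_mul_pathGreen (n : ℕ) (d r : ℕ → 𝕜)
    (hdr : ∀ l ≤ n, d l ^ 2 * r l = 1) (hr : ∑ l ∈ range (n + 1), r l ≠ 0) :
    pathIncidence n d * (pathIncidence n d)ᵀ * pathGreen n r = 1 := by
  ext ⟨i, hi⟩ ⟨k, hk⟩
  set T := ∑ l ∈ range (n + 1), r l
  rw [mul_apply]
  simp only [pathIncidence_mul_transpose_apply, pathGreen, of_apply, one_apply, Fin.mk.injEq]
  rw [Fin.sum_univ_eq_sum_range (fun j => (((if i = j then d i ^ 2 + d (i + 1) ^ 2 else 0)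
      - (if i + 1 = j then d j ^ 2 else 0) - (if j + 1 = i then d i ^ 2 else 0))
        * (pathGreenFun n r (j + 1) (k + 1) / T))),
    show (if i = k then (1 : 𝕜) else 0) = (if i + 1 = k + 1 then T else 0) / T by
      split_ifs <;> simp_all, ← pathGreenFun_recurrence hi d r hdr]
  rcases i with _ | i
  · simp [sub_mul, ite_mul, Finset.sum_sub_distrib, Finset.sum_ite_eq, pathGreenFun_zero_left, hi]
    split_ifs with h
    · ring
    · obtain rfl : n = 1 := by omega
      rw [show pathGreenFun 1 r 2 (k + 1) = 0 from pathGreenFun_add_one_left r (by omega)]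
      ring
  · simp [sub_mul, ite_mul, Finset.sum_sub_distrib, Finset.sum_ite_eq, hi, show i < n by omega]
    split_ifs with h
    · ring
    · obtain rfl : n = i + 2 := by omega
      rw [show pathGreenFun (i + 2) r (i + 1 + 2) (k + 1) = 0 from
        pathGreenFun_add_one_left r (by omega)]
      ring

theorem trace_pathGreen (n : ℕ) (r : ℕ → 𝕜) :
    (pathGreen n r).trace = ∑ i ∈ range n,
      (∑ l ∈ range (i + 1), r l) * (∑ l ∈ range (n + 1), r l - ∑ l ∈ range (i + 1), r l)
        / ∑ l ∈ range (n + 1), r l := by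
  simp [trace, pathGreen, pathGreenFun, Fin.sum_univ_eq_sum_range (fun i =>
    (∑ l ∈ range (i + 1), r l) * (∑ l ∈ range (n + 1), r l - ∑ l ∈ range (i + 1), r l)
      / ∑ l ∈ range (n + 1), r l)]

end Path

namespace Mmat

def resistance (n l : ℕ) : ℝ := if l = 0 ∨ l = n then 5 else 7

noncomputable def factor (n : ℕ) : Matrix (Fin n) (Fin (n + 1)) ℝ :=
  pathIncidence n fun l => (√(resistance n l))⁻¹

theorem eq_transpose_mul_factor {n : ℕ} (hn : 2 ≤ n) : Mmat n = (factor n)ᵀ * factor n := by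
  have h5 : (√5)⁻¹ * (√5)⁻¹ = (1 / 5 : ℝ) := by
    rw [← mul_inv, Real.mul_self_sqrt (by norm_num), one_div]
  have h7 : (√7)⁻¹ * (√7)⁻¹ = (1 / 7 : ℝ) := by
    rw [← mul_inv, Real.mul_self_sqrt (by norm_num), one_div]
  have h35 : (√5)⁻¹ * (√7)⁻¹ = (1 / √35 : ℝ) := by
    rw [← mul_inv, ← Real.sqrt_mul (by norm_num), one_div]
    norm_num
  ext ⟨j, hj⟩ ⟨k, hk⟩
  rw [factor, pathIncidence_transpose_mul_self_apply]
  simp only [Mmat, resistance, of_apply, Fin.mk.injEq]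
  split_ifs <;>
    first | omega | (subst_vars; simp only [h5, h7, h35, mul_comm (√7)⁻¹ (√5)⁻¹]; ring)

theorem factor_mul_transpose_mul_pathGreen (n : ℕ) :
    factor n * (factor n)ᵀ * pathGreen n (resistance n) = 1 := by
  have hr : ∀ l, 0 < resistance n l := fun l => by unfold resistance; split_ifs <;> norm_num
  refine pathIncidence_mul_transpose_mul_pathGreen n _ _ (fun l _ => ?_)
    (sum_pos (fun l _ => hr l) nonempty_range_add_one).ne'
  rw [inv_pow, Real.sq_sqrt (hr l).le, inv_mul_cancel₀ (hr l).ne']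

theorem sum_range_resistance {n a : ℕ} (ha : a < n) :
    ∑ l ∈ range (a + 1), resistance n l = 7 * a + 5 := by
  induction a with
  | zero => simp [resistance]
  | succ a ih =>
    rw [sum_range_succ, ih (by omega), resistance, if_neg (by omega)]
    push_cast
    ring

theorem sum_range_resistance_self {n : ℕ} (hn : 1 ≤ n) :
    ∑ l ∈ range (n + 1), resistance n l = 7 * n + 3 := by
  obtain ⟨m, rfl⟩ := Nat.exists_eq_add_of_le' hn
  rw [sum_range_succ, sum_range_resistance (by omega), resistance, if_pos (Or.inr rfl)]
  push_cast
  ring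

theorem trace_pathGreen_resistance {n : ℕ} (hn : 1 ≤ n) :
    (pathGreen n (resistance n)).trace =
      (49 * (n : ℝ) ^ 3 + 63 * (n : ℝ) ^ 2 + 38 * (n : ℝ)) / (6 * (7 * (n : ℝ) + 3)) := by
  rw [trace_pathGreen, sum_range_resistance_self hn, ← sum_div,
    sum_congr rfl fun i hi => by rw [sum_range_resistance (mem_range.mp hi)]]
  have hsum : ∀ (c : ℝ) (m : ℕ), ∑ i ∈ range m, (7 * (i : ℝ) + 5) * (c - (7 * i + 5)) =
      (7 * c - 70) * m * (m - 1) / 2 - 49 * (m - 1) * m * (2 * m - 1) / 6 + 5 * (c - 5) * m := by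
    intro c m
    induction m with
    | zero => simp
    | succ m ih =>
      rw [sum_range_succ, ih]
      push_cast
      ring
  rw [hsum]
  field_simp
  ring

end Mmat

theorem sum_inv_eigenvalues_Mmat (n : ℕ) (hn : 2 ≤ n)
    (α : Fin (n+1) → ℝ) (hmono : Monotone α)
    (hchar : (Mmat n).charpoly = ∏ i, (X - C (α i))) :
    α 0 = 0 ∧ (∀ i : Fin (n+1), i.val ≠ 0 → 0 < α i) ∧
      (∑ i ∈ Finset.univ.filter (fun i : Fin (n+1) => i.val ≠ 0), 1 / α i)
        = (49 * (n : ℝ)^3 + 63 * (n : ℝ)^2 + 38 * (n : ℝ)) / (6 * (7 * (n : ℝ) + 3)) := by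
  set K := Mmat.factor n * (Mmat.factor n)ᵀ
  have hKG : K * pathGreen n (Mmat.resistance n) = 1 := Mmat.factor_mul_transpose_mul_pathGreen n
  have hK : K.PosDef :=
    posDef_self_mul_transpose_of_det_ne_zero _ (det_ne_zero_of_right_inverse hKG)
  have hfac : (Mmat n).charpoly = X * K.charpoly := by
    simpa [Mmat.eq_transpose_mul_factor hn] using
      charpoly_mul_comm_of_le (Mmat.factor n)ᵀ (Mmat.factor n) (by simp)
  obtain ⟨hα₀, hprod⟩ := eq_zero_and_prod_succ_eq_of_prod_eq_X_mul hmono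
    (fun _ => hK.pos_of_isRoot_charpoly) (hchar ▸ hfac)
  have hpos : ∀ j : Fin n, 0 < α j.succ := fun j => hK.pos_of_isRoot_charpoly <| by
    simp [← hprod, eval_prod, Finset.prod_eq_zero (mem_univ j)]
  refine ⟨hα₀, fun i hi => ?_, ?_⟩
  · obtain ⟨j, rfl⟩ := Fin.exists_succ_eq.mpr (Fin.val_ne_zero_iff.mp hi)
    exact hpos j
  · rw [sum_filter, Fin.sum_univ_succ]
    simp only [Fin.val_zero, Fin.val_succ, ne_eq, not_true_eq_false, if_false, zero_add,
      Nat.succ_ne_zero, not_false_eq_true, if_true, one_div]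
    rw [← trace_inv_eq_sum_inv K (det_ne_zero_of_right_inverse hKG) univ _ hprod.symm,
      inv_eq_right_inv hKG, Mmat.trace_pathGreen_resistance (by omega)]
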